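/- Let V be a symmetric positive definite real d×d matrix, θ̂ ∈ ℝ^d, β ≥ 0, and B := {θ ∈ ℝ^d : ‖θ̂ − θ‖_V ≤ β}. Let α ∈ (0,1], r_b > 0, and suppose θ* ∈ B, ψ* ∈ ℝ^d with ‖ψ*‖₂ ≤ 1, (ψ*)ᵀθ* ≥ r_b, and λ_min(V) ≥ (2β/(α r_b))². Then (ψ*)ᵀθ̂ ≥ β/√(λ_min(V)) + (1 − α)·r_b; i.e., the optimal action's expected feature vector passes the pruned-action-set test. -/

import Mathlib

open Matrix

open scoped Classical in
/-- smallest eigenvalue of a real matrix (junk value 0 if not Hermitian) -/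
noncomputable def lamMin {d : ℕ} (V : Matrix (Fin d) (Fin d) ℝ) : ℝ :=
  if h : V.IsHermitian then ⨅ i, h.eigenvalues i else 0

open scoped Classical in
/-- largest eigenvalue of a real matrix (junk value 0 if not Hermitian) -/
noncomputable def lamMax {d : ℕ} (V : Matrix (Fin d) (Fin d) ℝ) : ℝ :=
  if h : V.IsHermitian then ⨆ i, h.eigenvalues i else 0

/-- weighted norm ‖z‖_V = √(zᵀ V z) -/
noncomputable def wnorm {d : ℕ} (V : Matrix (Fin d) (Fin d) ℝ) (z : Fin d → ℝ) : ℝ :=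
  Real.sqrt (z ⬝ᵥ V.mulVec z)

/-- Euclidean norm of a vector in ℝ^d -/
noncomputable def eucNorm {d : ℕ} (z : Fin d → ℝ) : ℝ :=
  Real.sqrt (z ⬝ᵥ z)

/-! The deviation `θ̂ - θ*` has `V`-norm at most `β`, hence Euclidean norm at most `β / √λ_min(V)`
(Rayleigh), so by Cauchy–Schwarz `ψ*ᵀθ̂ ≥ r_b - β / √λ_min(V)`. The eigenvalue hypothesis says
exactly that twice this error is at most `α r_b`. -/

open MatrixOrder in
theorem algebraMap_lamMin_le {d : ℕ} {V : Matrix (Fin d) (Fin d) ℝ} (hV : V.IsHermitian) :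
    algebraMap ℝ _ (lamMin V) ≤ V := by
  rw [algebraMap_le_iff_le_spectrum hV, hV.spectrum_real_eq_range_eigenvalues]
  rintro _ ⟨i, rfl⟩
  rw [lamMin, dif_pos hV]
  exact ciInf_le (Finite.bddBelow_range _) i

open MatrixOrder in
theorem lamMin_mul_dotProduct_self_le {d : ℕ} {V : Matrix (Fin d) (Fin d) ℝ}
    (hV : V.IsHermitian) (z : Fin d → ℝ) : lamMin V * (z ⬝ᵥ z) ≤ z ⬝ᵥ V *ᵥ z := by
  have := (Matrix.le_iff.mp (algebraMap_lamMin_le hV)).dotProduct_mulVec_nonneg z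
  simpa [Matrix.sub_mulVec, Algebra.algebraMap_eq_smul_one, Matrix.smul_mulVec, dotProduct_smul]
    using this

theorem lamMin_pos {d : ℕ} [NeZero d] {V : Matrix (Fin d) (Fin d) ℝ} (hV : V.PosDef) :
    0 < lamMin V := by
  rw [lamMin, dif_pos hV.isHermitian]
  obtain ⟨i, hi⟩ := exists_eq_ciInf_of_finite (f := hV.isHermitian.eigenvalues)
  exact hi ▸ hV.eigenvalues_pos i

theorem dotProduct_self_nonneg {n R : Type*} [Fintype n] [Ring R] [LinearOrder R]
    [IsStrictOrderedRing R] (x : n → R) : 0 ≤ x ⬝ᵥ x :=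
  Finset.sum_nonneg fun i _ => mul_self_nonneg (x i)

theorem abs_dotProduct_le_eucNorm_mul {d : ℕ} (x y : Fin d → ℝ) :
    |x ⬝ᵥ y| ≤ eucNorm x * eucNorm y := by
  rw [eucNorm, eucNorm, ← Real.sqrt_mul (dotProduct_self_nonneg x)]
  exact Real.abs_le_sqrt <| by
    simpa [dotProduct, sq] using Finset.sum_mul_sq_le_sq_mul_sq Finset.univ x y

theorem sqrt_lamMin_mul_eucNorm_le_wnorm {d : ℕ} {V : Matrix (Fin d) (Fin d) ℝ}
    (hV : V.IsHermitian) (z : Fin d → ℝ) : √(lamMin V) * eucNorm z ≤ wnorm V z := by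
  rw [eucNorm, wnorm, ← Real.sqrt_mul' _ (dotProduct_self_nonneg z)]
  exact Real.sqrt_le_sqrt (lamMin_mul_dotProduct_self_le hV z)

theorem abs_dotProduct_le_div_sqrt_lamMin {d : ℕ} {V : Matrix (Fin d) (Fin d) ℝ}
    (hV : V.IsHermitian) (hpos : 0 < lamMin V) {β : ℝ} {ψ z : Fin d → ℝ}
    (hψ : eucNorm ψ ≤ 1) (hz : wnorm V z ≤ β) : |ψ ⬝ᵥ z| ≤ β / √(lamMin V) := by
  have hz' : eucNorm z * √(lamMin V) ≤ β := by
    rw [mul_comm]; exact (sqrt_lamMin_mul_eucNorm_le_wnorm hV z).trans hz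
  calc |ψ ⬝ᵥ z| ≤ eucNorm ψ * eucNorm z := abs_dotProduct_le_eucNorm_mul ψ z
    _ ≤ eucNorm z := mul_le_of_le_one_left (Real.sqrt_nonneg _) hψ
    _ ≤ β / √(lamMin V) := (le_div_iff₀ (Real.sqrt_pos.2 hpos)).2 hz'

theorem stmt6_general {d : ℕ} (V : Matrix (Fin d) (Fin d) ℝ) (hV : V.PosDef)
    (θhat : Fin d → ℝ) (β : ℝ)
    (B : Set (Fin d → ℝ)) (hB : B = {θ : Fin d → ℝ | wnorm V (θhat - θ) ≤ β})
    (α rb : ℝ) (hα0 : 0 < α) (hrb : 0 < rb)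
    (θstar ψstar : Fin d → ℝ) (hθB : θstar ∈ B)
    (hψstar : eucNorm ψstar ≤ 1)
    (h1 : ψstar ⬝ᵥ θstar ≥ rb)
    (hlmin : lamMin V ≥ (2 * β / (α * rb)) ^ 2) :
    ψstar ⬝ᵥ θhat ≥ β / Real.sqrt (lamMin V) + (1 - α) * rb := by
  have : NeZero d := ⟨by rintro rfl; simp at h1; linarith⟩
  have hpos : 0 < lamMin V := lamMin_pos hV
  have hdev : |ψstar ⬝ᵥ (θhat - θstar)| ≤ β / √(lamMin V) :=
    abs_dotProduct_le_div_sqrt_lamMin hV.isHermitian hpos hψstar (by rwa [hB] at hθB)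
  have hslack : 2 * β / √(lamMin V) ≤ α * rb := by
    have h := (le_abs_self _).trans (Real.abs_le_sqrt hlmin)
    rw [div_le_iff₀ (by positivity)] at h
    rw [div_le_iff₀ (Real.sqrt_pos.2 hpos)]
    linarith
  rw [dotProduct_sub] at hdev
  linarith [(abs_le.mp hdev).1, mul_div_assoc 2 β √(lamMin V)]

theorem stmt6 {d : ℕ} (V : Matrix (Fin d) (Fin d) ℝ) (hV : V.PosDef)
    (θhat : Fin d → ℝ) (β : ℝ) (hβ : 0 ≤ β)
    (B : Set (Fin d → ℝ)) (hB : B = {θ : Fin d → ℝ | wnorm V (θhat - θ) ≤ β})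
    (α rb : ℝ) (hα0 : 0 < α) (hα1 : α ≤ 1) (hrb : 0 < rb)
    (θstar ψstar : Fin d → ℝ) (hθB : θstar ∈ B)
    (hψstar : eucNorm ψstar ≤ 1)
    (h1 : ψstar ⬝ᵥ θstar ≥ rb)
    (hlmin : lamMin V ≥ (2 * β / (α * rb)) ^ 2) :
    ψstar ⬝ᵥ θhat ≥ β / Real.sqrt (lamMin V) + (1 - α) * rb :=
  stmt6_general V hV θhat β B hB α rb hα0 hrb θstar ψstar hθB hψstar h1 hlmin
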